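/- Existence of the continuation function: if π,p₀ ⊨ e, then there exists a function k : dom(π) → dom(π) ∪ {null} with π ⊨ k (with respect to the root p₀). -/
import Mathlib


set_option autoImplicit false

namespace RegexMachines

/-- Regular expressions over an alphabet `α`. -/
inductive RE (α : Type) : Type where
  | eps : RE α
  | ch (a : α) : RE α
  | star (e : RE α) : RE α
  | seq (e₁ e₂ : RE α) : RE α
  | alt (e₁ e₂ : RE α) : RE α

/-- The big-step matching relation `e ⊨ w`. -/
inductive Matches {α : Type} : RE α → List α → Prop where
  | eps : Matches RE.eps []
  | ch (a : α) : Matches (RE.ch a) [a]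
  | seq {e₁ e₂ : RE α} {w₁ w₂ : List α} :
      Matches e₁ w₁ → Matches e₂ w₂ → Matches (RE.seq e₁ e₂) (w₁ ++ w₂)
  | starNil {e : RE α} : Matches (RE.star e) []
  | starCons {e : RE α} {w₁ w₂ : List α} :
      Matches e w₁ → Matches (RE.star e) w₂ → Matches (RE.star e) (w₁ ++ w₂)
  | altL {e₁ e₂ : RE α} {w : List α} : Matches e₁ w → Matches (RE.alt e₁ e₂) w
  | altR {e₁ e₂ : RE α} {w : List α} : Matches e₂ w → Matches (RE.alt e₁ e₂) w

/-- Configurations `⟨e | k | w⟩` of the EKW machine. -/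
abbrev EKWConfig (α : Type) : Type := RE α × List (RE α) × List α

/-- Transitions of the EKW machine. -/
inductive EKWStep {α : Type} : EKWConfig α → EKWConfig α → Prop where
  | altL {e₁ e₂ : RE α} {k : List (RE α)} {w : List α} :
      EKWStep (RE.alt e₁ e₂, k, w) (e₁, k, w)
  | altR {e₁ e₂ : RE α} {k : List (RE α)} {w : List α} :
      EKWStep (RE.alt e₁ e₂, k, w) (e₂, k, w)
  | seq {e₁ e₂ : RE α} {k : List (RE α)} {w : List α} :
      EKWStep (RE.seq e₁ e₂, k, w) (e₁, e₂ :: k, w)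
  | starIn {e : RE α} {k : List (RE α)} {w : List α} :
      EKWStep (RE.star e, k, w) (e, RE.star e :: k, w)
  | starOut {e : RE α} {k : List (RE α)} {w : List α} :
      EKWStep (RE.star e, k, w) (RE.eps, k, w)
  | ch {a : α} {k : List (RE α)} {w : List α} :
      EKWStep (RE.ch a, k, a :: w) (RE.eps, k, w)
  | pop {e : RE α} {k : List (RE α)} {w : List α} :
      EKWStep (RE.eps, e :: k, w) (e, k, w)

/-- Syntax-tree nodes stored in a heap; pointer arguments are natural numbers. -/
inductive Node (α : Type) : Type where
  | eps : Node α
  | ch (a : α) : Node α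
  | alt (p₁ p₂ : ℕ) : Node α
  | seq (p₁ p₂ : ℕ) : Node α
  | star (p₁ : ℕ) : Node α

/-- A heap is a partial function from (non-null) pointers to nodes.
The distinguished null pointer is modelled by `none : Option ℕ` wherever a
pointer-or-null is needed. -/
abbrev Heap (α : Type) : Type := ℕ → Option (Node α)

/-- Disjointness of two heaps (the `⊗` side condition). -/
def hDisj {α : Type} (π₁ π₂ : Heap α) : Prop := ∀ q : ℕ, π₁ q = none ∨ π₂ q = none

/-- Union of two heaps (`⊗`). -/
def hUnion {α : Type} (π₁ π₂ : Heap α) : Heap α :=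
  fun q => (π₁ q).orElse (fun _ => π₂ q)

/-- The singleton heap `p ↦ v`. -/
def singleH {α : Type} (p : ℕ) (v : Node α) : Heap α :=
  fun q => if q = p then some v else none

/-- Domain of a heap. -/
def hDom {α : Type} (π : Heap α) : Set ℕ := { q : ℕ | (π q).isSome }

/-- `dom(π) ∪ {null}` as a set of pointer-or-null values. -/
def domP {α : Type} (π : Heap α) : Set (Option ℕ) :=
  insert none { q : Option ℕ | ∃ n : ℕ, q = some n ∧ (π n).isSome }

/-- The representation relation `π, p ⊨ e`. -/
inductive HeapRepr {α : Type} : Heap α → ℕ → RE α → Prop where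
  | eps {p : ℕ} : HeapRepr (singleH p Node.eps) p RE.eps
  | ch {p : ℕ} {a : α} : HeapRepr (singleH p (Node.ch a)) p (RE.ch a)
  | alt {π π₁ π₂ : Heap α} {p p₁ p₂ : ℕ} {e₁ e₂ : RE α} :
      π = hUnion (singleH p (Node.alt p₁ p₂)) (hUnion π₁ π₂) →
      hDisj (singleH p (Node.alt p₁ p₂)) π₁ →
      hDisj (singleH p (Node.alt p₁ p₂)) π₂ →
      hDisj π₁ π₂ →
      HeapRepr π₁ p₁ e₁ → HeapRepr π₂ p₂ e₂ → HeapRepr π p (RE.alt e₁ e₂)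
  | seq {π π₁ π₂ : Heap α} {p p₁ p₂ : ℕ} {e₁ e₂ : RE α} :
      π = hUnion (singleH p (Node.seq p₁ p₂)) (hUnion π₁ π₂) →
      hDisj (singleH p (Node.seq p₁ p₂)) π₁ →
      hDisj (singleH p (Node.seq p₁ p₂)) π₂ →
      hDisj π₁ π₂ →
      HeapRepr π₁ p₁ e₁ → HeapRepr π₂ p₂ e₂ → HeapRepr π p (RE.seq e₁ e₂)
  | star {π π₁ : Heap α} {p p₁ : ℕ} {e₁ : RE α} :
      π = hUnion (singleH p (Node.star p₁)) π₁ →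
      hDisj (singleH p (Node.star p₁)) π₁ →
      HeapRepr π₁ p₁ e₁ → HeapRepr π p (RE.star e₁)

/-- `π ⊨ k`: the continuation function `k : dom(π) → dom(π) ∪ {null}` (with root `p₀`). -/
def KOk {α : Type} (π : Heap α) (k : ℕ → Option ℕ) (p₀ : ℕ) : Prop :=
  (∀ p : ℕ, (π p).isSome → k p = none ∨ ∃ q : ℕ, k p = some q ∧ (π q).isSome) ∧
  (∀ p q₁ q₂ : ℕ, π p = some (Node.alt q₁ q₂) → k q₁ = k p ∧ k q₂ = k p) ∧
  (∀ p q₁ q₂ : ℕ, π p = some (Node.seq q₁ q₂) → k q₁ = some q₂ ∧ k q₂ = k p) ∧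
  (∀ p q₁ : ℕ, π p = some (Node.star q₁) → k q₁ = some p) ∧
  k p₀ = none

/-- Unlabeled pointer transitions `p ⇀ q` relative to `π` and `k`. -/
inductive PStep {α : Type} (π : Heap α) (k : ℕ → Option ℕ) :
    Option ℕ → Option ℕ → Prop where
  | altL {p q₁ q₂ : ℕ} : π p = some (Node.alt q₁ q₂) → PStep π k (some p) (some q₁)
  | altR {p q₁ q₂ : ℕ} : π p = some (Node.alt q₁ q₂) → PStep π k (some p) (some q₂)
  | seq {p q₁ q₂ : ℕ} : π p = some (Node.seq q₁ q₂) → PStep π k (some p) (some q₁)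
  | starIn {p q₁ : ℕ} : π p = some (Node.star q₁) → PStep π k (some p) (some q₁)
  | starOut {p q₁ : ℕ} : π p = some (Node.star q₁) → PStep π k (some p) (k p)
  | eps {p : ℕ} : π p = some Node.eps → PStep π k (some p) (k p)

/-- Labeled pointer transitions `p ⇀ᵃ k(p)` relative to `π` and `k`. -/
inductive PStepA {α : Type} (π : Heap α) (k : ℕ → Option ℕ) (a : α) :
    Option ℕ → Option ℕ → Prop where
  | ch {p : ℕ} : π p = some (Node.ch a) → PStepA π k a (some p) (k p)

/-- Transitions of the PWπ machine on configurations `⟨p | w⟩`. -/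
inductive PWStep {α : Type} (π : Heap α) (k : ℕ → Option ℕ) :
    Option ℕ × List α → Option ℕ × List α → Prop where
  | silent {p q : Option ℕ} {w : List α} : PStep π k p q → PWStep π k (p, w) (q, w)
  | read {a : α} {p q : Option ℕ} {w : List α} :
      PStepA π k a p q → PWStep π k (p, a :: w) (q, w)

/-- `evolve(S)`: all character nodes reachable from `S` by `⇀*`. -/
def evolve {α : Type} (π : Heap α) (k : ℕ → Option ℕ) (S : Set (Option ℕ)) :
    Set (Option ℕ) :=
  { q : Option ℕ | ∃ (n : ℕ) (a : α), q = some n ∧ π n = some (Node.ch a) ∧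
      ∃ p ∈ S, Relation.ReflTransGen (PStep π k) p q }

/-- The lockstep transition `S ⟹ evolve(S)` on pointer sets. -/
def EvolveRel {α : Type} (π : Heap α) (k : ℕ → Option ℕ)
    (S S' : Set (Option ℕ)) : Prop :=
  S' = evolve π k S

/-- The lockstep transition `S ⟹ᵃ S'` on pointer sets. -/
def CharRel {α : Type} (π : Heap α) (k : ℕ → Option ℕ) (a : α)
    (S S' : Set (Option ℕ)) : Prop :=
  S' = { q : Option ℕ | ∃ p ∈ S, PStepA π k a p q }

/-- Transitions of the generic lockstep machine on configurations `⟨S | w⟩`. -/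
inductive LockStep {α : Type} (π : Heap α) (k : ℕ → Option ℕ) :
    Set (Option ℕ) × List α → Set (Option ℕ) × List α → Prop where
  | evolve {S S' : Set (Option ℕ)} {w : List α} :
      EvolveRel π k S S' → LockStep π k (S, w) (S', w)
  | read {S S' : Set (Option ℕ)} {a : α} {w : List α} :
      CharRel π k a S S' → LockStep π k (S, a :: w) (S', w)

/-- The child relation on pointers of a heap: `q` is a pointer argument of the node at `p`. -/
def Child {α : Type} (π : Heap α) (p q : ℕ) : Prop :=
  (∃ q₂ : ℕ, π p = some (Node.alt q q₂)) ∨ (∃ q₁ : ℕ, π p = some (Node.alt q₁ q)) ∨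
  (∃ q₂ : ℕ, π p = some (Node.seq q q₂)) ∨ (∃ q₁ : ℕ, π p = some (Node.seq q₁ q)) ∨
  π p = some (Node.star q)

/-- The subtree of `π` rooted at `q` represents `e`. -/
def ReprSub {α : Type} (π : Heap α) (q : ℕ) (e : RE α) : Prop :=
  ∃ π₁ π₂ : Heap α, hDisj π₁ π₂ ∧ π = hUnion π₁ π₂ ∧ HeapRepr π₁ q e

/-- `StackOf π k p l`: the continuation stack reconstructed from `p` by following `k` is `l`. -/
inductive StackOf {α : Type} (π : Heap α) (k : ℕ → Option ℕ) :
    ℕ → List (RE α) → Prop where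
  | nil {p : ℕ} : k p = none → StackOf π k p []
  | cons {p q : ℕ} {e' : RE α} {l : List (RE α)} :
      k p = some q → ReprSub π q e' → StackOf π k q l → StackOf π k p (e' :: l)

/-- Processes of the process calculus.  Messages `p̄` are on pointer-or-null channels;
receivers `p.M` listen on non-null pointer channels; `a.M` is an `n`-way sync prefix. -/
inductive Proc (α : Type) : Type where
  | msg (p : Option ℕ) : Proc α
  | par (M₁ M₂ : Proc α) : Proc α
  | recv (p : ℕ) (M : Proc α) : Proc α
  | sync (a : α) (M : Proc α) : Proc α

/-- Structural congruence: associativity/commutativity of `∥`. -/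
inductive PCong {α : Type} : Proc α → Proc α → Prop where
  | refl (M : Proc α) : PCong M M
  | symm {M N : Proc α} : PCong M N → PCong N M
  | trans {M N K : Proc α} : PCong M N → PCong N K → PCong M K
  | parComm (M N : Proc α) : PCong (Proc.par M N) (Proc.par N M)
  | parAssoc (M N K : Proc α) :
      PCong (Proc.par (Proc.par M N) K) (Proc.par M (Proc.par N K))
  | par {M M' N N' : Proc α} :
      PCong M M' → PCong N N' → PCong (Proc.par M N) (Proc.par M' N')
  | recv (p : ℕ) {M M' : Proc α} : PCong M M' → PCong (Proc.recv p M) (Proc.recv p M')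
  | sync (a : α) {M M' : Proc α} : PCong M M' → PCong (Proc.sync a M) (Proc.sync a M')

/-- Silent transitions `M → M'`: handshake communication, closed under parallel
context and structural congruence. -/
inductive PSilent {α : Type} : Proc α → Proc α → Prop where
  | comm (p : ℕ) (M : Proc α) :
      PSilent (Proc.par (Proc.recv p M) (Proc.msg (some p))) M
  | parL {M M' : Proc α} (N : Proc α) :
      PSilent M M' → PSilent (Proc.par M N) (Proc.par M' N)
  | congr {M M₁ M₂ M' : Proc α} :
      PCong M M₁ → PSilent M₁ M₂ → PCong M₂ M' → PSilent M M'

/-- `parList M [N₁, …, Nₙ] = M ∥ N₁ ∥ ⋯ ∥ Nₙ`. -/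
def parList {α : Type} : Proc α → List (Proc α) → Proc α
  | M, [] => M
  | M, N :: l => Proc.par M (parList N l)

/-- Labeled transitions `M →ᵃ M'`: `n`-way synchronization on `a` (discarding the rest),
closed under structural congruence. -/
inductive PLabel {α : Type} (a : α) : Proc α → Proc α → Prop where
  | sync (M₀ : Proc α) (Ms : List (Proc α)) (M' : Proc α) :
      (¬ ∃ M'' M''' : Proc α, PCong M' (Proc.par (Proc.sync a M'') M''')) →
      (∀ N : Proc α, ¬ PSilent M' N) →
      PLabel a (Proc.par (parList (Proc.sync a M₀) (Ms.map (Proc.sync a))) M')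
        (parList M₀ Ms)
  | congr {M M₁ M₂ M' : Proc α} :
      PCong M M₁ → PLabel a M₁ M₂ → PCong M₂ M' → PLabel a M M'

/-- The translation `⟦p⟧π` of a heap node into a process. -/
def transNode {α : Type} (k : ℕ → Option ℕ) (p : ℕ) : Node α → Proc α
  | Node.alt q₁ q₂ => Proc.recv p (Proc.par (Proc.msg (some q₁)) (Proc.msg (some q₂)))
  | Node.seq q₁ _ => Proc.recv p (Proc.msg (some q₁))
  | Node.star q₁ => Proc.recv p (Proc.par (Proc.msg (some q₁)) (Proc.msg (k p)))
  | Node.eps => Proc.recv p (Proc.msg (k p))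
  | Node.ch a => Proc.recv p (Proc.sync a (Proc.msg (k p)))

/-- The process for the node at pointer `p` of heap `π` (dummy if `p ∉ dom(π)`). -/
def nodeProc {α : Type} (π : Heap α) (k : ℕ → Option ℕ) (p : ℕ) : Proc α :=
  match π p with
  | some v => transNode k p v
  | none => Proc.msg none

/-- `M` is (a representation of) the translation `⟦π⟧`: the parallel composition
of `⟦p⟧π` over all `p ∈ dom(π)`. -/
def HeapProcOf {α : Type} (π : Heap α) (k : ℕ → Option ℕ) (M : Proc α) : Prop :=
  ∃ (p : ℕ) (l : List ℕ), (p :: l).Nodup ∧ (∀ q : ℕ, (π q).isSome ↔ q ∈ p :: l) ∧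
    M = parList (nodeProc π k p) (l.map (nodeProc π k))

/-- `M` is (a representation of) `S̄`: the parallel composition of the messages
`p̄` for `p ∈ S`. -/
def MsgsOf {α : Type} (S : Set (Option ℕ)) (M : Proc α) : Prop :=
  ∃ (p : Option ℕ) (l : List (Option ℕ)), (p :: l).Nodup ∧
    (∀ q : Option ℕ, q ∈ S ↔ q ∈ p :: l) ∧
    M = parList (Proc.msg p) (l.map Proc.msg)

section AuxLemmas

variable {α : Type}

lemma hUnion_left {π₁ π₂ : Heap α} {q : ℕ} {v : Node α} (h : π₁ q = some v) :
    hUnion π₁ π₂ q = some v := by simp [hUnion, h, Option.orElse]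

lemma hUnion_right {π₁ π₂ : Heap α} {q : ℕ} (h : π₁ q = none) :
    hUnion π₁ π₂ q = π₂ q := by simp [hUnion, h, Option.orElse]

lemma hUnion_isSome {π₁ π₂ : Heap α} {q : ℕ} :
    (hUnion π₁ π₂ q).isSome ↔ (π₁ q).isSome ∨ (π₂ q).isSome := by
  cases h : π₁ q with
  | none => simp [hUnion_right h, h]
  | some v => simp [hUnion_left h, h]

lemma singleH_self (p : ℕ) (v : Node α) : singleH p v p = some v := by simp [singleH]

lemma singleH_ne {p q : ℕ} (v : Node α) (h : q ≠ p) : singleH p v q = none := by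
  simp [singleH, h]

lemma disj_single {p : ℕ} {v : Node α} {π₁ : Heap α}
    (h : hDisj (singleH p v) π₁) : π₁ p = none := by
  rcases h p with h' | h'
  · simp [singleH] at h'
  · exact h'

lemma root_isSome {π : Heap α} {p : ℕ} {e : RE α} (h : HeapRepr π p e) :
    (π p).isSome := by
  induction h with
  | eps => simp [singleH]
  | ch => simp [singleH]
  | alt hπ _ _ _ _ _ _ _ =>
      subst hπ; rw [hUnion_left (singleH_self _ _)]; rfl
  | seq hπ _ _ _ _ _ _ _ =>
      subst hπ; rw [hUnion_left (singleH_self _ _)]; rfl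
  | star hπ _ _ _ =>
      subst hπ; rw [hUnion_left (singleH_self _ _)]; rfl

/-- Every pointer stored in a node of a represented heap is itself in the domain. -/
lemma heap_closed {π : Heap α} {p : ℕ} {e : RE α} (h : HeapRepr π p e) :
    (∀ q a b, π q = some (Node.alt a b) → (π a).isSome ∧ (π b).isSome) ∧
    (∀ q a b, π q = some (Node.seq a b) → (π a).isSome ∧ (π b).isSome) ∧
    (∀ q a, π q = some (Node.star a) → (π a).isSome) := by
  induction h with
  | @eps p =>
      refine ⟨?_, ?_, ?_⟩
      · intro q a b hq; by_cases hqp : q = p <;> simp [singleH, hqp] at hq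
      · intro q a b hq; by_cases hqp : q = p <;> simp [singleH, hqp] at hq
      · intro q a hq; by_cases hqp : q = p <;> simp [singleH, hqp] at hq
  | @ch p a =>
      refine ⟨?_, ?_, ?_⟩
      · intro q a' b hq; by_cases hqp : q = p <;> simp [singleH, hqp] at hq
      · intro q a' b hq; by_cases hqp : q = p <;> simp [singleH, hqp] at hq
      · intro q a' hq; by_cases hqp : q = p <;> simp [singleH, hqp] at hq
  | @alt π π₁ π₂ p p₁ p₂ e₁ e₂ hπ hd1 hd2 hd12 h1 h2 ih1 ih2 =>
      subst hπ
      have hs1 : π₁ p = none := disj_single hd1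
      have hs2 : π₂ p = none := disj_single hd2
      have lift : ∀ c : ℕ, (π₁ c).isSome ∨ (π₂ c).isSome →
          (hUnion (singleH p (Node.alt p₁ p₂)) (hUnion π₁ π₂) c).isSome := by
        intro c hc
        rw [hUnion_isSome, hUnion_isSome]; right; exact hc
      have key : ∀ q (n : Node α),
          hUnion (singleH p (Node.alt p₁ p₂)) (hUnion π₁ π₂) q = some n →
          (q = p ∧ n = Node.alt p₁ p₂) ∨ π₁ q = some n ∨ π₂ q = some n := by
        intro q n hq
        by_cases hqp : q = p
        · subst hqp
          rw [hUnion_left (singleH_self _ _)] at hq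
          exact Or.inl ⟨rfl, (Option.some_injective _ hq).symm⟩
        · rw [hUnion_right (singleH_ne _ hqp)] at hq
          cases h1q : π₁ q with
          | some v => rw [hUnion_left h1q] at hq; exact Or.inr (Or.inl hq)
          | none => rw [hUnion_right h1q] at hq; exact Or.inr (Or.inr hq)
      refine ⟨?_, ?_, ?_⟩
      · intro q a b hq
        rcases key q _ hq with ⟨hqp, hn⟩ | hq1 | hq2
        · cases hn
          exact ⟨lift _ (Or.inl (root_isSome h1)), lift _ (Or.inr (root_isSome h2))⟩
        · exact ⟨lift _ (Or.inl (ih1.1 _ _ _ hq1).1), lift _ (Or.inl (ih1.1 _ _ _ hq1).2)⟩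
        · exact ⟨lift _ (Or.inr (ih2.1 _ _ _ hq2).1), lift _ (Or.inr (ih2.1 _ _ _ hq2).2)⟩
      · intro q a b hq
        rcases key q _ hq with ⟨hqp, hn⟩ | hq1 | hq2
        · exact absurd hn (by simp)
        · exact ⟨lift _ (Or.inl (ih1.2.1 _ _ _ hq1).1), lift _ (Or.inl (ih1.2.1 _ _ _ hq1).2)⟩
        · exact ⟨lift _ (Or.inr (ih2.2.1 _ _ _ hq2).1), lift _ (Or.inr (ih2.2.1 _ _ _ hq2).2)⟩
      · intro q a hq
        rcases key q _ hq with ⟨hqp, hn⟩ | hq1 | hq2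
        · exact absurd hn (by simp)
        · exact lift _ (Or.inl (ih1.2.2 _ _ hq1))
        · exact lift _ (Or.inr (ih2.2.2 _ _ hq2))
  | @seq π π₁ π₂ p p₁ p₂ e₁ e₂ hπ hd1 hd2 hd12 h1 h2 ih1 ih2 =>
      subst hπ
      have lift : ∀ c : ℕ, (π₁ c).isSome ∨ (π₂ c).isSome →
          (hUnion (singleH p (Node.seq p₁ p₂)) (hUnion π₁ π₂) c).isSome := by
        intro c hc
        rw [hUnion_isSome, hUnion_isSome]; right; exact hc
      have key : ∀ q (n : Node α),
          hUnion (singleH p (Node.seq p₁ p₂)) (hUnion π₁ π₂) q = some n →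
          (q = p ∧ n = Node.seq p₁ p₂) ∨ π₁ q = some n ∨ π₂ q = some n := by
        intro q n hq
        by_cases hqp : q = p
        · subst hqp
          rw [hUnion_left (singleH_self _ _)] at hq
          exact Or.inl ⟨rfl, (Option.some_injective _ hq).symm⟩
        · rw [hUnion_right (singleH_ne _ hqp)] at hq
          cases h1q : π₁ q with
          | some v => rw [hUnion_left h1q] at hq; exact Or.inr (Or.inl hq)
          | none => rw [hUnion_right h1q] at hq; exact Or.inr (Or.inr hq)
      refine ⟨?_, ?_, ?_⟩
      · intro q a b hq
        rcases key q _ hq with ⟨hqp, hn⟩ | hq1 | hq2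
        · exact absurd hn (by simp)
        · exact ⟨lift _ (Or.inl (ih1.1 _ _ _ hq1).1), lift _ (Or.inl (ih1.1 _ _ _ hq1).2)⟩
        · exact ⟨lift _ (Or.inr (ih2.1 _ _ _ hq2).1), lift _ (Or.inr (ih2.1 _ _ _ hq2).2)⟩
      · intro q a b hq
        rcases key q _ hq with ⟨hqp, hn⟩ | hq1 | hq2
        · cases hn
          exact ⟨lift _ (Or.inl (root_isSome h1)), lift _ (Or.inr (root_isSome h2))⟩
        · exact ⟨lift _ (Or.inl (ih1.2.1 _ _ _ hq1).1), lift _ (Or.inl (ih1.2.1 _ _ _ hq1).2)⟩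
        · exact ⟨lift _ (Or.inr (ih2.2.1 _ _ _ hq2).1), lift _ (Or.inr (ih2.2.1 _ _ _ hq2).2)⟩
      · intro q a hq
        rcases key q _ hq with ⟨hqp, hn⟩ | hq1 | hq2
        · exact absurd hn (by simp)
        · exact lift _ (Or.inl (ih1.2.2 _ _ hq1))
        · exact lift _ (Or.inr (ih2.2.2 _ _ hq2))
  | @star π π₁ p p₁ e₁ hπ hd1 h1 ih1 =>
      subst hπ
      have lift : ∀ c : ℕ, (π₁ c).isSome →
          (hUnion (singleH p (Node.star p₁)) π₁ c).isSome := by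
        intro c hc
        rw [hUnion_isSome]; right; exact hc
      have key : ∀ q (n : Node α),
          hUnion (singleH p (Node.star p₁)) π₁ q = some n →
          (q = p ∧ n = Node.star p₁) ∨ π₁ q = some n := by
        intro q n hq
        by_cases hqp : q = p
        · subst hqp
          rw [hUnion_left (singleH_self _ _)] at hq
          exact Or.inl ⟨rfl, (Option.some_injective _ hq).symm⟩
        · rw [hUnion_right (singleH_ne _ hqp)] at hq
          exact Or.inr hq
      refine ⟨?_, ?_, ?_⟩
      · intro q a b hq
        rcases key q _ hq with ⟨hqp, hn⟩ | hq1
        · exact absurd hn (by simp)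
        · exact ⟨lift _ (ih1.1 _ _ _ hq1).1, lift _ (ih1.1 _ _ _ hq1).2⟩
      · intro q a b hq
        rcases key q _ hq with ⟨hqp, hn⟩ | hq1
        · exact absurd hn (by simp)
        · exact ⟨lift _ (ih1.2.1 _ _ _ hq1).1, lift _ (ih1.2.1 _ _ _ hq1).2⟩
      · intro q a hq
        rcases key q _ hq with ⟨hqp, hn⟩ | hq1
        · cases hn
          exact lift _ (root_isSome h1)
        · exact lift _ (ih1.2.2 _ _ hq1)

end AuxLemmas

section KExists

variable {α : Type}

/-- Generalized invariant: a continuation function whose root value is `t`, and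
whose values lie in `dom(π) ∪ {t}`. -/
def KGood (π : Heap α) (k : ℕ → Option ℕ) (p₀ : ℕ) (t : Option ℕ) : Prop :=
  k p₀ = t ∧
  (∀ p : ℕ, (π p).isSome → k p = t ∨ ∃ q : ℕ, k p = some q ∧ (π q).isSome) ∧
  (∀ p q₁ q₂ : ℕ, π p = some (Node.alt q₁ q₂) → k q₁ = k p ∧ k q₂ = k p) ∧
  (∀ p q₁ q₂ : ℕ, π p = some (Node.seq q₁ q₂) → k q₁ = some q₂ ∧ k q₂ = k p) ∧
  (∀ p q₁ : ℕ, π p = some (Node.star q₁) → k q₁ = some p)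

lemma kgood_exists {π : Heap α} {p₀ : ℕ} {e : RE α} (h : HeapRepr π p₀ e) :
    ∀ t : Option ℕ, ∃ k : ℕ → Option ℕ, KGood π k p₀ t := by
  classical
  induction h with
  | @eps p =>
      intro t
      refine ⟨fun q => if q = p then t else none, by simp, ?_, ?_, ?_, ?_⟩
      · intro q hq
        by_cases hqp : q = p
        · subst hqp; simp
        · simp [singleH, hqp] at hq
      · intro q a b hq; by_cases hqp : q = p <;> simp [singleH, hqp] at hq
      · intro q a b hq; by_cases hqp : q = p <;> simp [singleH, hqp] at hq
      · intro q a hq; by_cases hqp : q = p <;> simp [singleH, hqp] at hq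
  | @ch p a =>
      intro t
      refine ⟨fun q => if q = p then t else none, by simp, ?_, ?_, ?_, ?_⟩
      · intro q hq
        by_cases hqp : q = p
        · subst hqp; simp
        · simp [singleH, hqp] at hq
      · intro q a' b hq; by_cases hqp : q = p <;> simp [singleH, hqp] at hq
      · intro q a' b hq; by_cases hqp : q = p <;> simp [singleH, hqp] at hq
      · intro q a' hq; by_cases hqp : q = p <;> simp [singleH, hqp] at hq
  | @alt π π₁ π₂ p p₁ p₂ e₁ e₂ hπ hd1 hd2 hd12 h1 h2 ih1 ih2 =>
      subst hπ
      intro t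
      obtain ⟨k₁, hk₁0, hk₁c, hk₁a, hk₁q, hk₁t⟩ := ih1 t
      obtain ⟨k₂, hk₂0, hk₂c, hk₂a, hk₂q, hk₂t⟩ := ih2 t
      have hs1 : π₁ p = none := disj_single hd1
      have hs2 : π₂ p = none := disj_single hd2
      set k : ℕ → Option ℕ :=
        fun q => if q = p then t else if (π₁ q).isSome then k₁ q else k₂ q with hk
      have ev1 : ∀ q, (π₁ q).isSome → k q = k₁ q := by
        intro q hq
        have hqp : q ≠ p := fun hh => by rw [hh, hs1] at hq; simp at hq
        simp [hk, hqp, hq]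
      have ev2 : ∀ q, (π₂ q).isSome → k q = k₂ q := by
        intro q hq
        have hqp : q ≠ p := fun hh => by rw [hh, hs2] at hq; simp at hq
        have h1q : π₁ q = none := by
          rcases hd12 q with h' | h'
          · exact h'
          · rw [h'] at hq; simp at hq
        simp [hk, hqp, h1q]
      have evp : k p = t := by simp [hk]
      have lift : ∀ c : ℕ, (π₁ c).isSome ∨ (π₂ c).isSome →
          (hUnion (singleH p (Node.alt p₁ p₂)) (hUnion π₁ π₂) c).isSome := by
        intro c hc
        rw [hUnion_isSome, hUnion_isSome]; right; exact hc
      have key : ∀ q (n : Node α),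
          hUnion (singleH p (Node.alt p₁ p₂)) (hUnion π₁ π₂) q = some n →
          (q = p ∧ n = Node.alt p₁ p₂) ∨ π₁ q = some n ∨ π₂ q = some n := by
        intro q n hq
        by_cases hqp : q = p
        · subst hqp
          rw [hUnion_left (singleH_self _ _)] at hq
          exact Or.inl ⟨rfl, (Option.some_injective _ hq).symm⟩
        · rw [hUnion_right (singleH_ne _ hqp)] at hq
          cases h1q : π₁ q with
          | some v => rw [hUnion_left h1q] at hq; exact Or.inr (Or.inl hq)
          | none => rw [hUnion_right h1q] at hq; exact Or.inr (Or.inr hq)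
      refine ⟨k, evp, ?_, ?_, ?_, ?_⟩
      · intro q hq
        by_cases hqp : q = p
        · subst hqp; exact Or.inl evp
        · rw [hUnion_isSome, hUnion_isSome] at hq
          rcases hq with hq | hq | hq
          · exact absurd (by by_contra hne; rw [singleH_ne _ hne] at hq; simp at hq : q = p) hqp
          · rw [ev1 q hq]
            rcases hk₁c q hq with h' | ⟨r, hr1, hr2⟩
            · exact Or.inl h'
            · exact Or.inr ⟨r, hr1, lift r (Or.inl hr2)⟩
          · rw [ev2 q hq]
            rcases hk₂c q hq with h' | ⟨r, hr1, hr2⟩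
            · exact Or.inl h'
            · exact Or.inr ⟨r, hr1, lift r (Or.inr hr2)⟩
      · intro q a b hq
        rcases key q _ hq with ⟨hqp, hn⟩ | hq1 | hq2
        · subst hqp
          injection hn with ha hb
          subst ha; subst hb
          rw [ev1 _ (root_isSome h1), ev2 _ (root_isSome h2), evp]
          exact ⟨hk₁0, hk₂0⟩
        · have hc := (heap_closed h1).1 q a b hq1
          rw [ev1 _ hc.1, ev1 _ hc.2, ev1 _ (by rw [hq1]; rfl)]
          exact hk₁a q a b hq1
        · have hc := (heap_closed h2).1 q a b hq2
          rw [ev2 _ hc.1, ev2 _ hc.2, ev2 _ (by rw [hq2]; rfl)]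
          exact hk₂a q a b hq2
      · intro q a b hq
        rcases key q _ hq with ⟨hqp, hn⟩ | hq1 | hq2
        · exact absurd hn (by simp)
        · have hc := (heap_closed h1).2.1 q a b hq1
          rw [ev1 _ hc.1, ev1 _ hc.2, ev1 _ (by rw [hq1]; rfl)]
          exact hk₁q q a b hq1
        · have hc := (heap_closed h2).2.1 q a b hq2
          rw [ev2 _ hc.1, ev2 _ hc.2, ev2 _ (by rw [hq2]; rfl)]
          exact hk₂q q a b hq2
      · intro q a hq
        rcases key q _ hq with ⟨hqp, hn⟩ | hq1 | hq2
        · exact absurd hn (by simp)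
        · have hc := (heap_closed h1).2.2 q a hq1
          rw [ev1 _ hc]
          exact hk₁t q a hq1
        · have hc := (heap_closed h2).2.2 q a hq2
          rw [ev2 _ hc]
          exact hk₂t q a hq2
  | @seq π π₁ π₂ p p₁ p₂ e₁ e₂ hπ hd1 hd2 hd12 h1 h2 ih1 ih2 =>
      subst hπ
      intro t
      obtain ⟨k₁, hk₁0, hk₁c, hk₁a, hk₁q, hk₁t⟩ := ih1 (some p₂)
      obtain ⟨k₂, hk₂0, hk₂c, hk₂a, hk₂q, hk₂t⟩ := ih2 t
      have hs1 : π₁ p = none := disj_single hd1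
      have hs2 : π₂ p = none := disj_single hd2
      set k : ℕ → Option ℕ :=
        fun q => if q = p then t else if (π₁ q).isSome then k₁ q else k₂ q with hk
      have ev1 : ∀ q, (π₁ q).isSome → k q = k₁ q := by
        intro q hq
        have hqp : q ≠ p := fun hh => by rw [hh, hs1] at hq; simp at hq
        simp [hk, hqp, hq]
      have ev2 : ∀ q, (π₂ q).isSome → k q = k₂ q := by
        intro q hq
        have hqp : q ≠ p := fun hh => by rw [hh, hs2] at hq; simp at hq
        have h1q : π₁ q = none := by
          rcases hd12 q with h' | h'
          · exact h'
          · rw [h'] at hq; simp at hq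
        simp [hk, hqp, h1q]
      have evp : k p = t := by simp [hk]
      have lift : ∀ c : ℕ, (π₁ c).isSome ∨ (π₂ c).isSome →
          (hUnion (singleH p (Node.seq p₁ p₂)) (hUnion π₁ π₂) c).isSome := by
        intro c hc
        rw [hUnion_isSome, hUnion_isSome]; right; exact hc
      have key : ∀ q (n : Node α),
          hUnion (singleH p (Node.seq p₁ p₂)) (hUnion π₁ π₂) q = some n →
          (q = p ∧ n = Node.seq p₁ p₂) ∨ π₁ q = some n ∨ π₂ q = some n := by
        intro q n hq
        by_cases hqp : q = p
        · subst hqp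
          rw [hUnion_left (singleH_self _ _)] at hq
          exact Or.inl ⟨rfl, (Option.some_injective _ hq).symm⟩
        · rw [hUnion_right (singleH_ne _ hqp)] at hq
          cases h1q : π₁ q with
          | some v => rw [hUnion_left h1q] at hq; exact Or.inr (Or.inl hq)
          | none => rw [hUnion_right h1q] at hq; exact Or.inr (Or.inr hq)
      refine ⟨k, evp, ?_, ?_, ?_, ?_⟩
      · intro q hq
        by_cases hqp : q = p
        · subst hqp; exact Or.inl evp
        · rw [hUnion_isSome, hUnion_isSome] at hq
          rcases hq with hq | hq | hq
          · exact absurd (by by_contra hne; rw [singleH_ne _ hne] at hq; simp at hq : q = p) hqp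
          · rw [ev1 q hq]
            rcases hk₁c q hq with h' | ⟨r, hr1, hr2⟩
            · exact Or.inr ⟨p₂, h', lift p₂ (Or.inr (root_isSome h2))⟩
            · exact Or.inr ⟨r, hr1, lift r (Or.inl hr2)⟩
          · rw [ev2 q hq]
            rcases hk₂c q hq with h' | ⟨r, hr1, hr2⟩
            · exact Or.inl h'
            · exact Or.inr ⟨r, hr1, lift r (Or.inr hr2)⟩
      · intro q a b hq
        rcases key q _ hq with ⟨hqp, hn⟩ | hq1 | hq2
        · exact absurd hn (by simp)
        · have hc := (heap_closed h1).1 q a b hq1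
          rw [ev1 _ hc.1, ev1 _ hc.2, ev1 _ (by rw [hq1]; rfl)]
          exact hk₁a q a b hq1
        · have hc := (heap_closed h2).1 q a b hq2
          rw [ev2 _ hc.1, ev2 _ hc.2, ev2 _ (by rw [hq2]; rfl)]
          exact hk₂a q a b hq2
      · intro q a b hq
        rcases key q _ hq with ⟨hqp, hn⟩ | hq1 | hq2
        · subst hqp
          injection hn with ha hb
          subst ha; subst hb
          rw [ev1 _ (root_isSome h1), ev2 _ (root_isSome h2), evp]
          exact ⟨hk₁0, hk₂0⟩
        · have hc := (heap_closed h1).2.1 q a b hq1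
          rw [ev1 _ hc.1, ev1 _ hc.2, ev1 _ (by rw [hq1]; rfl)]
          exact hk₁q q a b hq1
        · have hc := (heap_closed h2).2.1 q a b hq2
          rw [ev2 _ hc.1, ev2 _ hc.2, ev2 _ (by rw [hq2]; rfl)]
          exact hk₂q q a b hq2
      · intro q a hq
        rcases key q _ hq with ⟨hqp, hn⟩ | hq1 | hq2
        · exact absurd hn (by simp)
        · have hc := (heap_closed h1).2.2 q a hq1
          rw [ev1 _ hc]
          exact hk₁t q a hq1
        · have hc := (heap_closed h2).2.2 q a hq2
          rw [ev2 _ hc]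
          exact hk₂t q a hq2
  | @star π π₁ p p₁ e₁ hπ hd1 h1 ih1 =>
      subst hπ
      intro t
      obtain ⟨k₁, hk₁0, hk₁c, hk₁a, hk₁q, hk₁t⟩ := ih1 (some p)
      have hs1 : π₁ p = none := disj_single hd1
      set k : ℕ → Option ℕ :=
        fun q => if q = p then t else if (π₁ q).isSome then k₁ q else none with hk
      have ev1 : ∀ q, (π₁ q).isSome → k q = k₁ q := by
        intro q hq
        have hqp : q ≠ p := fun hh => by rw [hh, hs1] at hq; simp at hq
        simp [hk, hqp, hq]
      have evp : k p = t := by simp [hk]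
      have lift : ∀ c : ℕ, (π₁ c).isSome →
          (hUnion (singleH p (Node.star p₁)) π₁ c).isSome := by
        intro c hc
        rw [hUnion_isSome]; right; exact hc
      have hps : (hUnion (singleH p (Node.star p₁)) π₁ p).isSome := by
        rw [hUnion_left (singleH_self _ _)]; rfl
      have key : ∀ q (n : Node α),
          hUnion (singleH p (Node.star p₁)) π₁ q = some n →
          (q = p ∧ n = Node.star p₁) ∨ π₁ q = some n := by
        intro q n hq
        by_cases hqp : q = p
        · subst hqp
          rw [hUnion_left (singleH_self _ _)] at hq
          exact Or.inl ⟨rfl, (Option.some_injective _ hq).symm⟩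
        · rw [hUnion_right (singleH_ne _ hqp)] at hq
          exact Or.inr hq
      refine ⟨k, evp, ?_, ?_, ?_, ?_⟩
      · intro q hq
        by_cases hqp : q = p
        · subst hqp; exact Or.inl evp
        · rw [hUnion_isSome] at hq
          rcases hq with hq | hq
          · exact absurd (by by_contra hne; rw [singleH_ne _ hne] at hq; simp at hq : q = p) hqp
          · rw [ev1 q hq]
            rcases hk₁c q hq with h' | ⟨r, hr1, hr2⟩
            · exact Or.inr ⟨p, h', hps⟩
            · exact Or.inr ⟨r, hr1, lift r hr2⟩
      · intro q a b hq
        rcases key q _ hq with ⟨hqp, hn⟩ | hq1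
        · exact absurd hn (by simp)
        · have hc := (heap_closed h1).1 q a b hq1
          rw [ev1 _ hc.1, ev1 _ hc.2, ev1 _ (by rw [hq1]; rfl)]
          exact hk₁a q a b hq1
      · intro q a b hq
        rcases key q _ hq with ⟨hqp, hn⟩ | hq1
        · exact absurd hn (by simp)
        · have hc := (heap_closed h1).2.1 q a b hq1
          rw [ev1 _ hc.1, ev1 _ hc.2, ev1 _ (by rw [hq1]; rfl)]
          exact hk₁q q a b hq1
      · intro q a hq
        rcases key q _ hq with ⟨hqp, hn⟩ | hq1
        · subst hqp
          injection hn with ha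
          subst ha
          rw [ev1 _ (root_isSome h1)]
          exact hk₁0
        · have hc := (heap_closed h1).2.2 q a hq1
          rw [ev1 _ hc]
          exact hk₁t q a hq1

end KExists

/-- Existence of the continuation function: if `π, p₀ ⊨ e` then there is
a function `k : dom(π) → dom(π) ∪ {null}` with `π ⊨ k` (with respect to the root `p₀`). -/
theorem knode_exists {α : Type} [Fintype α] {π : Heap α} {p₀ : ℕ} {e : RE α}
    (h : HeapRepr π p₀ e) :
    ∃ k : ℕ → Option ℕ, KOk π k p₀ := by
  obtain ⟨k, hk0, hkc, hka, hkq, hkt⟩ := kgood_exists h none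
  exact ⟨k, hkc, hka, hkq, hkt, hk0⟩

end RegexMachines
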